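/- Let ν ∈ ℳ(𝒳×𝒳*) with ν ≪ ν_1⊗ℚ. With ν_k the normalized restriction of ν to 𝒳×𝒳_k*, ℚ_k the conditional kernel ℚ_k{c|a} = ℚ{c|a}/ℚ{𝒳_k*|a} for c∈𝒳_k*, and f_k(a,c) = 1_{ν_k(a,c)>0} log( ν_k(a,c) / ((ν_k)_1⊗ℚ_k)(a,c) ), f^{(0,q]}(a,c) = 1_{ν_1⊗ℚ(a,c) ≥ ν(a,c) > 0} log( ν(a,c)/(ν_1⊗ℚ)(a,c) ), f^{(q,1]}(a,c) = 1_{1 ≥ ν(a,c) > ν_1⊗ℚ(a,c)} log( ν(a,c)/(ν_1⊗ℚ)(a,c) ), the following hold: (i) limsup_{k→∞} ⟨f^{(0,q]}, ν_k⟩ ≤ ⟨f^{(0,q]}, ν⟩; (ii) limsup_{k→∞} ⟨f_k, ν_k⟩ ≤ ⟨f^{(0,q]}, ν⟩ + ⟨f^{(q,1]}, ν⟩. -/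

import Mathlib

open scoped ENNReal NNReal Classical
open Filter

namespace GWLD

/-! ### The space `𝒳* = ⋃ₙ {n} × 𝒳ⁿ` of offspring configurations -/

/-- `𝒳* = ⋃ₙ {n} × 𝒳ⁿ`, with the discrete topology (it is a countable type). -/
abbrev XStar (𝒳 : Type) : Type := Σ n : ℕ, Fin n → 𝒳

/-- the multiplicity `m(b,c)` of the symbol `b` in `c = (n, a₁, …, aₙ)`. -/
noncomputable def mult {𝒳 : Type} (b : 𝒳) (c : XStar 𝒳) : ℕ :=
  (Finset.univ.filter fun i : Fin c.1 => c.2 i = b).card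

/-! ### Finite rooted planar typed trees -/

/-- A finite rooted planar tree, each vertex carrying a type from `𝒳`. -/
inductive TypedTree (𝒳 : Type) where
  | node : 𝒳 → List (TypedTree 𝒳) → TypedTree 𝒳

namespace TypedTree

variable {𝒳 : Type}

/-- the type of the root. -/
def rootType : TypedTree 𝒳 → 𝒳
  | node a _ => a

mutual
  /-- the number `|T|` of vertices of the tree. -/
  def size : TypedTree 𝒳 → ℕ
    | node _ ts => 1 + sizeList ts
  def sizeList : List (TypedTree 𝒳) → ℕ
    | [] => 0
    | t :: ts => size t + sizeList ts
end

/-- the element of `𝒳*` recording the number and types of the roots of a list of trees;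
`spec ts = C(v)` when `ts` is the list of subtrees hanging off the vertex `v`. -/
def spec (ts : List (TypedTree 𝒳)) : XStar 𝒳 :=
  ⟨ts.length, fun i => rootType (ts.get i)⟩

mutual
  /-- `offCount t (a,c) = #{v ∈ V : (X(v), C(v)) = (a,c)}`. -/
  noncomputable def offCount : TypedTree 𝒳 → 𝒳 × XStar 𝒳 → ℕ
    | node a ts, p => (if p = (a, spec ts) then 1 else 0) + offCountList ts p
  noncomputable def offCountList : List (TypedTree 𝒳) → 𝒳 × XStar 𝒳 → ℕ
    | [], _ => 0
    | t :: ts, p => offCount t p + offCountList ts p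
end

mutual
  /-- `pairCount t (a,b) = #{e ∈ E : (X(e₁), X(e₂)) = (a,b)}`. -/
  noncomputable def pairCount : TypedTree 𝒳 → 𝒳 × 𝒳 → ℕ
    | node a ts, p =>
        (ts.map fun s => if p = (a, rootType s) then 1 else 0).sum + pairCountList ts p
  noncomputable def pairCountList : List (TypedTree 𝒳) → 𝒳 × 𝒳 → ℕ
    | [], _ => 0
    | t :: ts, p => pairCount t p + pairCountList ts p
end

mutual
  /-- `∏_{v ∈ V} ℚ{C(v) | X(v)}`. -/
  noncomputable def treeWeight (Q : 𝒳 → XStar 𝒳 → ℝ) : TypedTree 𝒳 → ℝ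
    | node a ts => Q a (spec ts) * treeWeightList Q ts
  noncomputable def treeWeightList (Q : 𝒳 → XStar 𝒳 → ℝ) : List (TypedTree 𝒳) → ℝ
    | [] => 1
    | t :: ts => treeWeight Q t * treeWeightList Q ts
end

end TypedTree

open TypedTree

variable {𝒳 : Type}

/-! ### Empirical measures -/

/-- the empirical offspring measure `M_X`. -/
noncomputable def MX (t : TypedTree 𝒳) : 𝒳 × XStar 𝒳 → ℝ :=
  fun p => (offCount t p : ℝ) / (size t : ℝ)

/-- the empirical pair measure `L̃_X` (normalised by the number of vertices). -/
noncomputable def LtX (t : TypedTree 𝒳) : 𝒳 × 𝒳 → ℝ :=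
  fun p => (pairCount t p : ℝ) / (size t : ℝ)

/-- the empirical pair measure `L_X` (normalised by the number `|T| - 1` of edges). -/
noncomputable def LX (t : TypedTree 𝒳) : 𝒳 × 𝒳 → ℝ :=
  fun p => (pairCount t p : ℝ) / ((size t : ℝ) - 1)

/-! ### The law of a multitype Galton-Watson tree and conditioning on the total size -/

/-- the probability that the multitype Galton-Watson tree with initial law `μ` and
offspring kernel `Q` produces exactly the typed tree `t`. -/
noncomputable def gwLaw (μ : 𝒳 → ℝ) (Q : 𝒳 → XStar 𝒳 → ℝ) (t : TypedTree 𝒳) : ℝ :=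
  μ (rootType t) * treeWeight Q t

/-- `P{|T| = n}`. -/
noncomputable def partSum (μ : 𝒳 → ℝ) (Q : 𝒳 → XStar 𝒳 → ℝ) (n : ℕ) : ℝ :=
  ∑' t : TypedTree 𝒳, if size t = n then gwLaw μ Q t else 0

/-- `P{X ∈ A | |T| = n}`. -/
noncomputable def condProb (μ : 𝒳 → ℝ) (Q : 𝒳 → XStar 𝒳 → ℝ)
    (A : Set (TypedTree 𝒳)) (n : ℕ) : ℝ :=
  (∑' t : TypedTree 𝒳, if size t = n ∧ t ∈ A then gwLaw μ Q t else 0) / partSum μ Q n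

/-- `n → ∞` along those `n` for which `P{|T| = n} > 0`. -/
noncomputable def condFilter (μ : 𝒳 → ℝ) (Q : 𝒳 → XStar 𝒳 → ℝ) : Filter ℕ :=
  Filter.atTop ⊓ Filter.principal {n : ℕ | 0 < partSum μ Q n}

/-! ### Large deviation principles -/

/-- extended logarithm, `elog x = -∞` for `x ≤ 0`. -/
noncomputable def elog (x : ℝ) : EReal := if x ≤ 0 then (⊥ : EReal) else ((Real.log x : ℝ) : EReal)

/-- A family `P n` of (conditional) probabilities on a topological space `S` satisfies a
large deviation principle with speed `n`, along the filter `L`, with rate function `I`. -/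
def HasLDP {S : Type*} [TopologicalSpace S] (P : ℕ → Set S → ℝ) (L : Filter ℕ)
    (I : S → ℝ≥0∞) : Prop :=
  (∀ F : Set S, IsClosed F →
      Filter.limsup (fun n : ℕ => (((n : ℝ)⁻¹ : ℝ) : EReal) * elog (P n F)) L
        ≤ -(⨅ x ∈ F, (I x : EReal))) ∧
  (∀ G : Set S, IsOpen G →
      -(⨅ x ∈ G, (I x : EReal))
        ≤ Filter.liminf (fun n : ℕ => (((n : ℝ)⁻¹ : ℝ) : EReal) * elog (P n G)) L)

/-- a good rate function: lower semicontinuous with compact sublevel sets. -/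
def IsGoodRate {S : Type*} [TopologicalSpace S] (I : S → ℝ≥0∞) : Prop :=
  LowerSemicontinuous I ∧ ∀ c : ℝ≥0∞, c ≠ ⊤ → IsCompact {x : S | I x ≤ c}

/-! ### Relative entropy -/

/-- relative entropy `H(ν ‖ μ)` of two (probability) mass functions on a countable set,
written via `φ(x) = x log x - x + 1` so that all summands are nonnegative. -/
noncomputable def relEnt {α : Type*} (ν μ : α → ℝ) : ℝ≥0∞ :=
  if ∀ x, μ x = 0 → ν x = 0 then
    ∑' x, ENNReal.ofReal (ν x * Real.log (ν x / μ x) - ν x + μ x)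
  else ⊤

/-! ### Probability vectors and offspring kernels -/

/-- a probability mass function. -/
def IsProbVec {α : Type*} (μ : α → ℝ) : Prop := (∀ a, 0 ≤ μ a) ∧ HasSum μ 1

/-- an offspring transition kernel from `𝒳` to `𝒳*`. -/
def IsKernel (Q : 𝒳 → XStar 𝒳 → ℝ) : Prop :=
  (∀ a c, 0 ≤ Q a c) ∧ ∀ a, HasSum (Q a) 1

/-- the offspring numbers have finite second moment under `Q{·|a}` for every `a`. -/
def FiniteSecondMoment (Q : 𝒳 → XStar 𝒳 → ℝ) : Prop :=
  ∀ a, Summable fun c : XStar 𝒳 => ((c.1 : ℝ)) ^ 2 * Q a c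

/-! ### The mean matrix, weak irreducibility and criticality -/

/-- the mean matrix `A(a,b) = Σ_c ℚ{c|b} m(a,c)`, valued in `[0,∞]`. -/
noncomputable def AmatE [Fintype 𝒳] (Q : 𝒳 → XStar 𝒳 → ℝ) : Matrix 𝒳 𝒳 ℝ≥0∞ :=
  Matrix.of fun a b => ∑' c : XStar 𝒳, (mult a c : ℝ≥0∞) * ENNReal.ofReal (Q b c)

/-- `A*(a,b) = Σ_{k ≥ 1} A^k(a,b) ∈ [0,∞]`. -/
noncomputable def Astar [Fintype 𝒳] [DecidableEq 𝒳] (Q : 𝒳 → XStar 𝒳 → ℝ) (a b : 𝒳) : ℝ≥0∞ :=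
  ∑' k : ℕ, (AmatE Q ^ (k + 1)) a b

/-- the multitype Galton-Watson tree with offspring kernel `Q` is weakly irreducible:
`𝒳` splits into recurrent and transient states as prescribed, and the number of
transient offspring is uniformly bounded under `Q`. -/
def WeaklyIrreducibleGW [Fintype 𝒳] [DecidableEq 𝒳] (Q : 𝒳 → XStar 𝒳 → ℝ) : Prop :=
  ∃ Xr Xt : Set 𝒳, Xr.Nonempty ∧ Disjoint Xr Xt ∧ Xr ∪ Xt = Set.univ ∧
    (∀ a b, b ∈ Xr → 0 < Astar Q a b) ∧
    (∀ a b, b ∈ Xt → (a = b ∨ a ∈ Xr) → Astar Q a b = 0) ∧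
    ∃ C : ℕ, ∀ a c, Q a c ≠ 0 → (∑ b : 𝒳, if b ∈ Xt then mult b c else 0) ≤ C

/-- the mean matrix as a real matrix (meaningful when the entries are finite). -/
noncomputable def Amat [Fintype 𝒳] (Q : 𝒳 → XStar 𝒳 → ℝ) : Matrix 𝒳 𝒳 ℝ :=
  Matrix.of fun a b => ∑' c : XStar 𝒳, (mult a c : ℝ) * Q b c

/-- `r` is the Perron-Frobenius eigenvalue of the nonnegative matrix `M` : it is an
eigenvalue with a nonnegative eigenvector dominating the modulus of every eigenvalue. -/
def IsPerronRoot [Fintype 𝒳] [DecidableEq 𝒳] (M : Matrix 𝒳 𝒳 ℝ) (r : ℝ) : Prop :=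
  (∃ v : 𝒳 → ℝ, v ≠ 0 ∧ (∀ a, 0 ≤ v a) ∧ M.mulVec v = r • v) ∧
  ∀ z : ℂ, (M.map (algebraMap ℝ ℂ)).charpoly.IsRoot z → ‖z‖ ≤ r

/-- criticality: the Perron-Frobenius eigenvalue of the mean matrix is `1`. -/
def CriticalGW [Fintype 𝒳] [DecidableEq 𝒳] (Q : 𝒳 → XStar 𝒳 → ℝ) : Prop :=
  IsPerronRoot (Amat Q) 1

/-! ### Spaces of measures (weak topology = topology of pointwise convergence) -/

/-- `ℳ̃(𝒳×𝒳)`: finite (nonnegative) measures on `𝒳 × 𝒳`. -/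
def Mpair (𝒳 : Type) : Set ((𝒳 × 𝒳) → ℝ) := {ϖ | ∀ p, 0 ≤ ϖ p}

/-- `ℳ(𝒳×𝒳*)`: probability measures `ν` on `𝒳 × 𝒳*` with `∫ n dν < ∞`. -/
def Mstar (𝒳 : Type) : Set ((𝒳 × XStar 𝒳) → ℝ) :=
  {ν | (∀ p, 0 ≤ ν p) ∧ HasSum ν 1 ∧ Summable fun p : 𝒳 × XStar 𝒳 => (p.2.1 : ℝ) * ν p}

/-- `ℳ(𝒳×𝒳_k*)`: probability measures on `𝒳 × 𝒳*` carried by `𝒳 × 𝒳_k*`. -/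
def MstarK (𝒳 : Type) (k : ℕ) : Set ((𝒳 × XStar 𝒳) → ℝ) :=
  {ν | ν ∈ Mstar 𝒳 ∧ ∀ p : 𝒳 × XStar 𝒳, k < p.2.1 → ν p = 0}

/-- `ℳ(𝒳×𝒳)` as probability measures: the empirical pair measure lives here. -/
def Mprob2 (𝒳 : Type) [Fintype 𝒳] : Set ((𝒳 × 𝒳) → ℝ) :=
  {μ | (∀ p, 0 ≤ μ p) ∧ ∑ p : 𝒳 × 𝒳, μ p = 1}

/-- the `𝒳`-marginal `ν₁` of a measure on `𝒳 × 𝒳*`. -/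
noncomputable def nu1 (ν : (𝒳 × XStar 𝒳) → ℝ) : 𝒳 → ℝ := fun a => ∑' c : XStar 𝒳, ν (a, c)

/-- the second marginal `ϖ₂` of a measure on `𝒳 × 𝒳`. -/
noncomputable def pi2 [Fintype 𝒳] (ϖ : (𝒳 × 𝒳) → ℝ) : 𝒳 → ℝ := fun b => ∑ a : 𝒳, ϖ (a, b)

/-- `(ϖ, ν)` is sub-consistent: `ϖ(a,b) ≥ Σ_c m(b,c) ν(a,c)` for all `a, b`. -/
def SubConsistent (ϖ : (𝒳 × 𝒳) → ℝ) (ν : (𝒳 × XStar 𝒳) → ℝ) : Prop :=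
  ∀ a b : 𝒳, (∑' c : XStar 𝒳, (mult b c : ℝ) * ν (a, c)) ≤ ϖ (a, b)

/-- `(ϖ, ν)` is consistent: `ϖ(a,b) = Σ_c m(b,c) ν(a,c)` for all `a, b`. -/
def Consistent (ϖ : (𝒳 × 𝒳) → ℝ) (ν : (𝒳 × XStar 𝒳) → ℝ) : Prop :=
  ∀ a b : 𝒳, (∑' c : XStar 𝒳, (mult b c : ℝ) * ν (a, c)) = ϖ (a, b)

/-- the measure `ν₁ ⊗ ℚ (a,c) = ν₁(a) ℚ{c|a}` on `𝒳 × 𝒳*`. -/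
noncomputable def prodQ (ν1f : 𝒳 → ℝ) (Q : 𝒳 → XStar 𝒳 → ℝ) : (𝒳 × XStar 𝒳) → ℝ :=
  fun p => ν1f p.1 * Q p.1 p.2

/-! ### The rate functions -/

/-- the rate function `J` of Theorem 2.1. -/
noncomputable def Jrate [Fintype 𝒳] (Q : 𝒳 → XStar 𝒳 → ℝ)
    (ϖ : (𝒳 × 𝒳) → ℝ) (ν : (𝒳 × XStar 𝒳) → ℝ) : ℝ≥0∞ :=
  if SubConsistent ϖ ν ∧ pi2 ϖ = nu1 ν then relEnt ν (prodQ (nu1 ν) Q) else ⊤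

/-- the rate function `J_k` of Theorem 2.3 (consistency instead of sub-consistency). -/
noncomputable def JrateC [Fintype 𝒳] (Q : 𝒳 → XStar 𝒳 → ℝ)
    (ϖ : (𝒳 × 𝒳) → ℝ) (ν : (𝒳 × XStar 𝒳) → ℝ) : ℝ≥0∞ :=
  if Consistent ϖ ν ∧ pi2 ϖ = nu1 ν then relEnt ν (prodQ (nu1 ν) Q) else ⊤

/-- the rate function `K` of Corollary 2.2. -/
noncomputable def Krate (Q : 𝒳 → XStar 𝒳 → ℝ) (ν : (𝒳 × XStar 𝒳) → ℝ) : ℝ≥0∞ :=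
  if ∀ b : 𝒳, (∑' p : 𝒳 × XStar 𝒳, (mult b p.2 : ℝ) * ν p) ≤ nu1 ν b then
    relEnt ν (prodQ (nu1 ν) Q)
  else ⊤

/-- the rate function `J̃`, defined on sub-consistent pairs. -/
noncomputable def Jtilde [Fintype 𝒳] (Q : 𝒳 → XStar 𝒳 → ℝ)
    (ϖ : (𝒳 × 𝒳) → ℝ) (ν : (𝒳 × XStar 𝒳) → ℝ) : ℝ≥0∞ :=
  if pi2 ϖ = nu1 ν then relEnt ν (prodQ (nu1 ν) Q) else ⊤

/-! ### Events -/

/-- the event `{(L̃_X, M_X) ∈ F}` for `F` a set of pairs of measures. -/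
def evPairOff (F : Set (↥(Mpair 𝒳) × ↥(Mstar 𝒳))) : Set (TypedTree 𝒳) :=
  {t | ∃ x ∈ F, x.1.1 = LtX t ∧ x.2.1 = MX t}

/-- the event `{(L̃_X, M_X) ∈ F}` for `F` a set of pairs with second component in `ℳ(𝒳×𝒳_k*)`. -/
def evPairOffK (k : ℕ) (F : Set (↥(Mpair 𝒳) × ↥(MstarK 𝒳 k))) : Set (TypedTree 𝒳) :=
  {t | ∃ x ∈ F, x.1.1 = LtX t ∧ x.2.1 = MX t}

/-- the event `{M_X ∈ F}`. -/
def evOff (F : Set ↥(Mstar 𝒳)) : Set (TypedTree 𝒳) := {t | ∃ x ∈ F, x.1 = MX t}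

/-- the event `{L_X ∈ F}`. -/
def evPair [Fintype 𝒳] (F : Set ↥(Mprob2 𝒳)) : Set (TypedTree 𝒳) := {t | ∃ x ∈ F, x.1 = LX t}

/-- `ℳ_s`, the (closed) set of sub-consistent pairs, as a subspace. -/
def Msub (𝒳 : Type) : Set (↥(Mpair 𝒳) × ↥(Mstar 𝒳)) := {x | SubConsistent x.1.1 x.2.1}

/-- `ℳ_{c,k}`, the (closed) set of consistent pairs, as a subspace. -/
def MsubK (𝒳 : Type) (k : ℕ) : Set (↥(Mpair 𝒳) × ↥(MstarK 𝒳 k)) := {x | Consistent x.1.1 x.2.1}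

/-- the event `{(L̃_X, M_X) ∈ F}` for `F ⊆ ℳ_s`. -/
def evPairOffSub (F : Set ↥(Msub 𝒳)) : Set (TypedTree 𝒳) :=
  {t | ∃ x ∈ F, x.1.1.1 = LtX t ∧ x.1.2.1 = MX t}

/-- the event `{(L̃_X, M_X) ∈ F}` for `F ⊆ ℳ_{c,k}`. -/
def evPairOffSubK (k : ℕ) (F : Set ↥(MsubK 𝒳 k)) : Set (TypedTree 𝒳) :=
  {t | ∃ x ∈ F, x.1.1.1 = LtX t ∧ x.1.2.1 = MX t}

/-! ### Markov chains indexed by Galton-Watson trees -/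

/-- the offspring kernel of a Markov chain with transition kernel `Q` indexed by a
Galton-Watson tree with offspring law `p`: `ℚ{c|b} = p(n) ∏ᵢ Q{aᵢ|b}`. -/
noncomputable def mcKernel (p : ℕ → ℝ) (Q : 𝒳 → 𝒳 → ℝ) : 𝒳 → XStar 𝒳 → ℝ :=
  fun b c => p c.1 * ∏ i : Fin c.1, Q b (c.2 i)

/-- irreducibility of a Markovian transition kernel on `𝒳`. -/
def IrreducibleKernel [Fintype 𝒳] [DecidableEq 𝒳] (Q : 𝒳 → 𝒳 → ℝ) : Prop :=
  ∀ a b : 𝒳, ∃ n : ℕ, 0 < ((Matrix.of Q) ^ (n + 1)) a b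

/-- first marginal of a measure on `𝒳 × 𝒳`. -/
noncomputable def mu1m [Fintype 𝒳] (μ : (𝒳 × 𝒳) → ℝ) : 𝒳 → ℝ := fun a => ∑ b : 𝒳, μ (a, b)

/-- second marginal of a measure on `𝒳 × 𝒳`. -/
noncomputable def mu2m [Fintype 𝒳] (μ : (𝒳 × 𝒳) → ℝ) : 𝒳 → ℝ := fun b => ∑ a : 𝒳, μ (a, b)

/-- the Cramér transform `I_p(x) = sup_λ {λx - log Σₙ p(n) e^{λn}}` of an offspring law,
as an element of `[0,∞]` (the log-moment generating function being `+∞`,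
i.e. the bracket being `-∞`, where the series diverges). -/
noncomputable def Ip (p : ℕ → ℝ) (x : ℝ) : ℝ≥0∞ :=
  ⨆ lam : ℝ,
    if Summable (fun n : ℕ => p n * Real.exp (lam * n)) then
      ENNReal.ofReal (lam * x - Real.log (∑' n : ℕ, p n * Real.exp (lam * n)))
    else 0

/-- the log-moment generating function `Λ_p(λ)`, valued in `(-∞, ∞]`. -/
noncomputable def logMgf (p : ℕ → ℝ) (lam : ℝ) : EReal :=
  if Summable (fun n : ℕ => p n * Real.exp (lam * n)) then
    ((Real.log (∑' n : ℕ, p n * Real.exp (lam * n)) : ℝ) : EReal)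
  else ⊤

/-- the rate function `I` of Theorem 2.5. -/
noncomputable def Irate [Fintype 𝒳] (p : ℕ → ℝ) (Q : 𝒳 → 𝒳 → ℝ) (μ : (𝒳 × 𝒳) → ℝ) : ℝ≥0∞ :=
  if ∀ a : 𝒳, mu2m μ a = 0 → mu1m μ a = 0 then
    relEnt μ (fun q : 𝒳 × 𝒳 => mu1m μ q.1 * Q q.1 q.2)
      + ∑ a : 𝒳, ENNReal.ofReal (mu2m μ a) * Ip p (mu1m μ a / mu2m μ a)
  else ⊤

/-! ### The variational upper-bound functional `Ĵ` -/

/-- bounded functions on `𝒳 × 𝒳*`. -/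
def BddFun {α : Type*} (g : α → ℝ) : Prop := ∃ M : ℝ, ∀ x, |g x| ≤ M

/-- `U_g(a) = log Σ_c e^{g(a,c)} ℚ{c|a}`. -/
noncomputable def Ug (Q : 𝒳 → XStar 𝒳 → ℝ) (g : (𝒳 × XStar 𝒳) → ℝ) (a : 𝒳) : ℝ :=
  Real.log (∑' c : XStar 𝒳, Real.exp (g (a, c)) * Q a c)

/-- `Ĵ(ϖ,ν) = sup_{g bounded} { ∫ g dν - ∫ U_g(b) ϖ(da,db) }`. -/
noncomputable def Jhat [Fintype 𝒳] (Q : 𝒳 → XStar 𝒳 → ℝ)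
    (ϖ : (𝒳 × 𝒳) → ℝ) (ν : (𝒳 × XStar 𝒳) → ℝ) : ℝ≥0∞ :=
  ⨆ (g : (𝒳 × XStar 𝒳) → ℝ) (_ : BddFun g),
    ENNReal.ofReal ((∑' p : 𝒳 × XStar 𝒳, g p * ν p) - ∑ q : 𝒳 × 𝒳, Ug Q g q.2 * ϖ q)

/-! ### Truncation, conditional kernels, total variation -/

/-- `‖ν‖_k = ν(𝒳 × 𝒳_k*)`. -/
noncomputable def normK (k : ℕ) (ν : (𝒳 × XStar 𝒳) → ℝ) : ℝ :=
  ∑' p : 𝒳 × XStar 𝒳, if p.2.1 ≤ k then ν p else 0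

/-- `ν_k`, the normalised restriction of `ν` to `𝒳 × 𝒳_k*`. -/
noncomputable def restrictK (k : ℕ) (ν : (𝒳 × XStar 𝒳) → ℝ) : (𝒳 × XStar 𝒳) → ℝ :=
  fun p => if p.2.1 ≤ k then ν p / normK k ν else 0

/-- `ℚ{𝒳_k* | a}`. -/
noncomputable def QmassK (Q : 𝒳 → XStar 𝒳 → ℝ) (k : ℕ) (a : 𝒳) : ℝ :=
  ∑' c : XStar 𝒳, if c.1 ≤ k then Q a c else 0

/-- the conditional offspring kernel `ℚ_k{c|a} = ℚ{c|a} / ℚ{𝒳_k*|a}` on `𝒳_k*`. -/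
noncomputable def Qcond (Q : 𝒳 → XStar 𝒳 → ℝ) (k : ℕ) : 𝒳 → XStar 𝒳 → ℝ :=
  fun a c => if c.1 ≤ k then Q a c / QmassK Q k a else 0

/-- `ϖ_k(a,b) = Σ_{c ∈ 𝒳_k*} m(b,c) ν_k(a,c)`. -/
noncomputable def piK (k : ℕ) (ν : (𝒳 × XStar 𝒳) → ℝ) : (𝒳 × 𝒳) → ℝ :=
  fun q => ∑' c : XStar 𝒳, (mult q.2 c : ℝ) * restrictK k ν (q.1, c)

/-- the total variation metric `d(ν,ν̃) = (1/2) Σ |ν - ν̃|`. -/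
noncomputable def tvDist {α : Type*} (ν ν' : α → ℝ) : ℝ := (1 / 2) * ∑' x, |ν x - ν' x|

/-- the pairing `⟨f, ν⟩ = Σ f dν`, valued in `[-∞,∞]`
(defined as the difference of the positive and negative parts). -/
noncomputable def pairE {α : Type*} (f ν : α → ℝ) : EReal :=
  ((∑' x, ENNReal.ofReal (f x * ν x) : ℝ≥0∞) : EReal)
    - ((∑' x, ENNReal.ofReal (-(f x * ν x)) : ℝ≥0∞) : EReal)

/-- `f^{(0,q]} = 1_{ν₁⊗ℚ ≥ ν > 0} log (ν / ν₁⊗ℚ)`. -/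
noncomputable def f0q (Q : 𝒳 → XStar 𝒳 → ℝ) (ν : (𝒳 × XStar 𝒳) → ℝ) : (𝒳 × XStar 𝒳) → ℝ :=
  fun p => if 0 < ν p ∧ ν p ≤ prodQ (nu1 ν) Q p then Real.log (ν p / prodQ (nu1 ν) Q p) else 0

/-- `f^{(q,1]} = 1_{1 ≥ ν > ν₁⊗ℚ} log (ν / ν₁⊗ℚ)`. -/
noncomputable def fq1 (Q : 𝒳 → XStar 𝒳 → ℝ) (ν : (𝒳 × XStar 𝒳) → ℝ) : (𝒳 × XStar 𝒳) → ℝ :=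
  fun p => if prodQ (nu1 ν) Q p < ν p ∧ ν p ≤ 1 then Real.log (ν p / prodQ (nu1 ν) Q p) else 0

/-- `f_k = 1_{ν_k > 0} log (ν_k / (ν_k)₁⊗ℚ_k)`. -/
noncomputable def fres (Q : 𝒳 → XStar 𝒳 → ℝ) (k : ℕ) (ν : (𝒳 × XStar 𝒳) → ℝ) :
    (𝒳 × XStar 𝒳) → ℝ :=
  fun p => if 0 < restrictK k ν p then
    Real.log (restrictK k ν p / prodQ (nu1 (restrictK k ν)) (Qcond Q k) p) else 0

/-! ### Product laws on `𝒳*` and on `𝒳ⁿ` -/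

/-- the offspring law `q(c) = p(n) ∏ᵢ q̂(aᵢ)` on `𝒳*`. -/
noncomputable def qProd (p : ℕ → ℝ) (qhat : 𝒳 → ℝ) : XStar 𝒳 → ℝ :=
  fun c => p c.1 * ∏ i : Fin c.1, qhat (c.2 i)

/-- the product measure `q̂ⁿ` on `𝒳ⁿ`. -/
noncomputable def prodM (qhat : 𝒳 → ℝ) (n : ℕ) : (Fin n → 𝒳) → ℝ := fun y => ∏ i, qhat (y i)

/-- the `i`-th marginal `v_{n,i}` of a measure on `𝒳ⁿ`. -/
noncomputable def marginal [Fintype 𝒳] {n : ℕ} (v : (Fin n → 𝒳) → ℝ) (i : Fin n) : 𝒳 → ℝ :=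
  fun b => ∑ y : Fin n → 𝒳, if y i = b then v y else 0

/-- the tilted law `s_λ(n) = p(n) e^{λn - Λ_p(λ)}`. -/
noncomputable def tilted (p : ℕ → ℝ) (lam : ℝ) : ℕ → ℝ :=
  fun n => p n * Real.exp (lam * n - Real.log (∑' m : ℕ, p m * Real.exp (lam * m)))

/-- `n × M_X[N > B]`: the number of vertices with more than `B` children. -/
noncomputable def bigCount (t : TypedTree 𝒳) (B : ℕ) : ℝ :=
  ∑' p : 𝒳 × XStar 𝒳, if B < p.2.1 then (TypedTree.offCount t p : ℝ) else 0


/-!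
Both pairings with `ν_k` are finite sums: they equal the sums of `f ν` over `𝒳 × 𝒳_k*`
divided by `‖ν‖_k → 1`, so they converge to `⟨f, ν⟩` by dominated convergence whenever `f ν`
is summable. For `f^{(0,q]}` it is, since `-f^{(0,q]} ν ≤ ν₁ ⊗ ℚ` by `log x ≥ 1 - 1/x`.
On the support of `ν_k`, `f_k = f^{(0,q]} + f^{(q,1]} + log (ν₁(a) ℚ{𝒳_k*|a} / ν({a} × 𝒳_k*))`,
and the last term tends to `0` uniformly in `a` because `𝒳` is finite. Hence both limsups are
limits, except when `⟨f^{(q,1]}, ν⟩ = ∞`, where (ii) is trivial.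
-/

open Topology

section Summation

variable {α : Type*}

theorem _root_.Summable.max_zero {g : α → ℝ} (hg : Summable g) : Summable fun x => max (g x) 0 :=
  hg.abs.of_nonneg_of_le (fun _ => le_max_right _ _)
    (fun _ => max_le (le_abs_self _) (abs_nonneg _))

theorem coe_tsum_ofReal_eq_coe_tsum_max_zero {g : α → ℝ} (hg : Summable g) :
    ((∑' x, ENNReal.ofReal (g x) : ℝ≥0∞) : EReal) = ((∑' x, max (g x) 0 : ℝ) : EReal) := by
  have hmax : ∀ x, ENNReal.ofReal (g x) = ENNReal.ofReal (max (g x) 0) := by simp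
  rw [tsum_congr hmax, ← ENNReal.ofReal_tsum_of_nonneg (fun _ => le_max_right _ _) hg.max_zero,
    EReal.coe_ennreal_ofReal, max_eq_left (tsum_nonneg fun _ => le_max_right _ _)]

theorem pairE_eq_coe_tsum {f ν : α → ℝ} (h : Summable fun x => f x * ν x) :
    pairE f ν = ((∑' x, f x * ν x : ℝ) : EReal) := by
  rw [pairE, coe_tsum_ofReal_eq_coe_tsum_max_zero h, coe_tsum_ofReal_eq_coe_tsum_max_zero h.neg,
    ← EReal.coe_sub, ← h.max_zero.tsum_sub h.neg.max_zero]
  simp_rw [max_zero_sub_max_neg_zero_eq_self]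

theorem pairE_eq_top_of_not_summable {f ν : α → ℝ} (h0 : ∀ x, 0 ≤ f x * ν x)
    (h : ¬ Summable fun x => f x * ν x) : pairE f ν = ⊤ := by
  have htop : (∑' x, ENNReal.ofReal (f x * ν x)) = ⊤ := by
    by_contra hne
    exact h ((ENNReal.summable_toReal hne).congr fun x => ENNReal.toReal_ofReal (h0 x))
  simp [pairE, htop, ENNReal.ofReal_of_nonpos (neg_nonpos.mpr (h0 _))]

theorem tendsto_tsum_ite_le (ℓ : α → ℕ) {g : α → ℝ} (hg : Summable g) :
    Tendsto (fun k : ℕ => ∑' x, if ℓ x ≤ k then g x else 0) atTop (𝓝 (∑' x, g x)) := by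
  refine tendsto_tsum_of_dominated_convergence hg.abs (fun x => ?_)
    (Eventually.of_forall fun k x => ?_)
  · exact tendsto_const_nhds.congr'
      ((eventually_ge_atTop (ℓ x)).mono fun k hk => (if_pos hk).symm)
  · split_ifs <;> simp

end Summation

theorem finite_setOf_fst_le [Finite 𝒳] (k : ℕ) : {c : XStar 𝒳 | c.1 ≤ k}.Finite :=
  (Set.finite_Iic k).preimage' fun n _ => by
    simpa [Set.preimage, Sigma.ext_iff] using
      Set.finite_range (Sigma.mk (β := fun n => Fin n → 𝒳) n)

theorem summable_ite_fst_le [Finite 𝒳] (k : ℕ) (g : XStar 𝒳 → ℝ) :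
    Summable fun c : XStar 𝒳 => if c.1 ≤ k then g c else 0 :=
  summable_of_hasFiniteSupport <| (finite_setOf_fst_le k).subset fun c hc => by
    by_contra h; exact hc (if_neg h)

theorem summable_ite_snd_fst_le [Finite 𝒳] (k : ℕ) (g : 𝒳 × XStar 𝒳 → ℝ) :
    Summable fun p : 𝒳 × XStar 𝒳 => if p.2.1 ≤ k then g p else 0 :=
  summable_of_hasFiniteSupport <| (Set.finite_univ.prod (finite_setOf_fst_le k)).subset
    fun p hp => by by_contra h; exact hp (if_neg fun hk => h ⟨trivial, hk⟩)

section Restriction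

variable {ν : 𝒳 × XStar 𝒳 → ℝ}

theorem restrictK_apply (k : ℕ) (p : 𝒳 × XStar 𝒳) :
    restrictK k ν p = (if p.2.1 ≤ k then ν p else 0) / normK k ν := by
  rw [restrictK]; split_ifs <;> simp

theorem normK_nonneg (hν0 : ∀ p, 0 ≤ ν p) (k : ℕ) : 0 ≤ normK k ν :=
  tsum_nonneg fun p => by split_ifs <;> simp [hν0 p]

theorem restrictK_nonneg (hν0 : ∀ p, 0 ≤ ν p) (k : ℕ) (p : 𝒳 × XStar 𝒳) :
    0 ≤ restrictK k ν p := by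
  rw [restrictK_apply]
  exact div_nonneg (by split_ifs <;> simp [hν0 p]) (normK_nonneg hν0 k)

theorem tsum_mul_restrictK (f : 𝒳 × XStar 𝒳 → ℝ) (k : ℕ) :
    ∑' p, f p * restrictK k ν p
      = (∑' p : 𝒳 × XStar 𝒳, if p.2.1 ≤ k then f p * ν p else 0) / normK k ν := by
  rw [← tsum_div_const]
  refine tsum_congr fun p => ?_
  rw [restrictK_apply]
  split_ifs <;> simp [mul_div_assoc]

theorem tendsto_normK (hν : HasSum ν 1) : Tendsto (normK · ν) atTop (𝓝 1) := by
  simpa [normK, hν.tsum_eq] using tendsto_tsum_ite_le (fun p : 𝒳 × XStar 𝒳 => p.2.1) hν.summable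

theorem tendsto_tsum_mul_restrictK (hν : HasSum ν 1) {f : 𝒳 × XStar 𝒳 → ℝ}
    (hf : Summable fun p => f p * ν p) :
    Tendsto (fun k => ∑' p, f p * restrictK k ν p) atTop (𝓝 (∑' p, f p * ν p)) := by
  simp_rw [tsum_mul_restrictK]
  have h := (tendsto_tsum_ite_le (fun p : 𝒳 × XStar 𝒳 => p.2.1) hf).div
    (tendsto_normK hν) one_ne_zero
  rw [div_one] at h
  exact h

variable [Finite 𝒳]

theorem summable_mul_restrictK (f : 𝒳 × XStar 𝒳 → ℝ) (k : ℕ) :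
    Summable fun p => f p * restrictK k ν p := by
  refine (summable_ite_snd_fst_le k fun p => f p * restrictK k ν p).congr fun p => ?_
  split_ifs with h
  · rfl
  · simp [restrictK, h]

theorem tendsto_pairE_restrictK (hν : HasSum ν 1) {f : 𝒳 × XStar 𝒳 → ℝ}
    (hf : Summable fun p => f p * ν p) :
    Tendsto (fun k => pairE f (restrictK k ν)) atTop (𝓝 (pairE f ν)) := by
  simp_rw [pairE_eq_coe_tsum (summable_mul_restrictK f _), pairE_eq_coe_tsum hf]
  exact EReal.tendsto_coe.mpr (tendsto_tsum_mul_restrictK hν hf)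

end Restriction

section Kernel

variable {Q : 𝒳 → XStar 𝒳 → ℝ} {ν : 𝒳 × XStar 𝒳 → ℝ}

theorem nu1_nonneg (hν0 : ∀ p, 0 ≤ ν p) (a : 𝒳) : 0 ≤ nu1 ν a :=
  tsum_nonneg fun c => hν0 (a, c)

theorem prodQ_nonneg {μ : 𝒳 → ℝ} (hμ : ∀ a, 0 ≤ μ a) (hQ0 : ∀ a c, 0 ≤ Q a c)
    (p : 𝒳 × XStar 𝒳) : 0 ≤ prodQ μ Q p :=
  mul_nonneg (hμ p.1) (hQ0 p.1 p.2)

theorem summable_prodQ [Finite 𝒳] {μ : 𝒳 → ℝ} (hμ : ∀ a, 0 ≤ μ a) (hQ : IsKernel Q) :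
    Summable (prodQ μ Q) :=
  (summable_prod_of_nonneg fun p => prodQ_nonneg hμ hQ.1 p).2
    ⟨fun a => (hQ.2 a).summable.mul_left (μ a), Summable.of_finite⟩

theorem f0q_nonpos (p : 𝒳 × XStar 𝒳) : f0q Q ν p ≤ 0 := by
  unfold f0q
  split_ifs with h
  · exact Real.log_nonpos (div_nonneg h.1.le (h.1.le.trans h.2))
      ((div_le_one (h.1.trans_le h.2)).2 h.2)
  · rfl

theorem fq1_nonneg {p : 𝒳 × XStar 𝒳} (hπ : 0 ≤ prodQ (nu1 ν) Q p) : 0 ≤ fq1 Q ν p := by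
  unfold fq1
  split_ifs with h
  · rcases hπ.eq_or_lt with h0 | h0
    · simp [← h0]
    · exact Real.log_nonneg ((one_le_div h0).2 h.1.le)
  · rfl

theorem f0q_add_fq1 {p : 𝒳 × XStar 𝒳} (hpos : 0 < ν p) (hle : ν p ≤ 1) :
    f0q Q ν p + fq1 Q ν p = Real.log (ν p / prodQ (nu1 ν) Q p) := by
  unfold f0q fq1
  by_cases h : ν p ≤ prodQ (nu1 ν) Q p
  · simp [hpos, h]
  · simp [h, hle, not_le.1 h]

theorem neg_f0q_mul_le {p : 𝒳 × XStar 𝒳} (hπ : 0 ≤ prodQ (nu1 ν) Q p) :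
    -(f0q Q ν p * ν p) ≤ prodQ (nu1 ν) Q p := by
  unfold f0q
  split_ifs with h
  · obtain ⟨hpos, hle⟩ := h
    have hlog := Real.one_sub_inv_le_log_of_pos (div_pos hpos (hpos.trans_le hle))
    rw [inv_div] at hlog
    have hmul : (1 - prodQ (nu1 ν) Q p / ν p) * ν p = ν p - prodQ (nu1 ν) Q p := by
      field_simp
    nlinarith [mul_le_mul_of_nonneg_right hlog hpos.le]
  · simpa using hπ

theorem summable_f0q_mul [Finite 𝒳] (hQ : IsKernel Q) (hν0 : ∀ p, 0 ≤ ν p) :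
    Summable fun p => f0q Q ν p * ν p := by
  have hπ := prodQ_nonneg (nu1_nonneg hν0) hQ.1
  have hneg := (summable_prodQ (nu1_nonneg hν0) hQ).of_nonneg_of_le
    (fun p => neg_nonneg.2 (mul_nonpos_of_nonpos_of_nonneg (f0q_nonpos p) (hν0 p)))
    (fun p => neg_f0q_mul_le (hπ p))
  simpa using hneg.neg

end Kernel

section Conditioning

variable {Q : 𝒳 → XStar 𝒳 → ℝ} {ν : 𝒳 × XStar 𝒳 → ℝ}

noncomputable def truncLogRatio (Q : 𝒳 → XStar 𝒳 → ℝ) (ν : 𝒳 × XStar 𝒳 → ℝ) (k : ℕ)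
    (a : 𝒳) : ℝ :=
  Real.log (nu1 ν a * QmassK Q k a / ∑' c : XStar 𝒳, if c.1 ≤ k then ν (a, c) else 0)

theorem tendsto_truncLogRatio (hQ1 : ∀ a, HasSum (Q a) 1) (hν : Summable ν) :
    Tendsto (truncLogRatio Q ν) atTop (𝓝 0) := by
  refine tendsto_pi_nhds.2 fun a => ?_
  by_cases ha : nu1 ν a = 0
  · simp [truncLogRatio, ha]
  have hmass : Tendsto (fun k => QmassK Q k a) atTop (𝓝 1) := by
    simpa [QmassK, (hQ1 a).tsum_eq] using
      tendsto_tsum_ite_le (fun c : XStar 𝒳 => c.1) (hQ1 a).summable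
  have hslice : Tendsto (fun k => ∑' c : XStar 𝒳, if c.1 ≤ k then ν (a, c) else 0) atTop
      (𝓝 (nu1 ν a)) :=
    tendsto_tsum_ite_le (fun c : XStar 𝒳 => c.1) (hν.prod_factor a)
  have hratio := (tendsto_const_nhds (x := nu1 ν a)).mul hmass |>.div hslice ha
  rw [mul_one, div_self ha] at hratio
  have hlog := (Real.continuousAt_log one_ne_zero).tendsto.comp hratio
  rw [Real.log_one] at hlog
  exact hlog

theorem nu1_restrictK (k : ℕ) (a : 𝒳) :
    nu1 (restrictK k ν) a = (∑' c : XStar 𝒳, if c.1 ≤ k then ν (a, c) else 0) / normK k ν := by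
  rw [nu1, ← tsum_div_const]
  exact tsum_congr fun c => restrictK_apply k (a, c)

theorem pos_of_restrictK_pos (hν0 : ∀ p, 0 ≤ ν p) {k : ℕ} {p : 𝒳 × XStar 𝒳}
    (hp : 0 < restrictK k ν p) : p.2.1 ≤ k ∧ 0 < ν p ∧ 0 < normK k ν := by
  have hk : p.2.1 ≤ k := by
    by_contra h
    simp [restrictK, h] at hp
  have hN : 0 < normK k ν := (normK_nonneg hν0 k).lt_of_ne fun h => by
    simp [restrictK, ← h] at hp
  rw [restrictK_apply, if_pos hk, div_pos_iff_of_pos_right hN] at hp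
  exact ⟨hk, hp, hN⟩

theorem fres_eq_log_add_truncLogRatio [Finite 𝒳] (hQ0 : ∀ a c, 0 ≤ Q a c) (hν0 : ∀ p, 0 ≤ ν p)
    (habs : ∀ p, prodQ (nu1 ν) Q p = 0 → ν p = 0) {k : ℕ} {p : 𝒳 × XStar 𝒳}
    (hp : 0 < restrictK k ν p) :
    fres Q k ν p = Real.log (ν p / prodQ (nu1 ν) Q p) + truncLogRatio Q ν k p.1 := by
  obtain ⟨hk, hpos, hN⟩ := pos_of_restrictK_pos hν0 hp
  obtain ⟨a, c⟩ := p
  have hπ : 0 < prodQ (nu1 ν) Q (a, c) :=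
    (prodQ_nonneg (nu1_nonneg hν0) hQ0 _).lt_of_ne fun h => hpos.ne' (habs _ h.symm)
  have hν₁ : 0 < nu1 ν a := (nu1_nonneg hν0 a).lt_of_ne (left_ne_zero_of_mul hπ.ne').symm
  have hQ₀ : 0 < Q a c := (hQ0 a c).lt_of_ne (right_ne_zero_of_mul hπ.ne').symm
  have hmass : 0 < QmassK Q k a := hQ₀.trans_le <| by
    simpa [QmassK, hk] using (summable_ite_fst_le k (Q a)).le_tsum c fun c' _ => by
      split_ifs <;> simp [hQ0 a c']
  have hslice : 0 < ∑' c' : XStar 𝒳, if c'.1 ≤ k then ν (a, c') else 0 := hpos.trans_le <| by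
    simpa [hk] using (summable_ite_fst_le k fun c' => ν (a, c')).le_tsum c fun c' _ => by
      split_ifs <;> simp [hν0 (a, c')]
  have hratio : restrictK k ν (a, c) / prodQ (nu1 (restrictK k ν)) (Qcond Q k) (a, c)
      = ν (a, c) / prodQ (nu1 ν) Q (a, c)
        * (nu1 ν a * QmassK Q k a / ∑' c' : XStar 𝒳, if c'.1 ≤ k then ν (a, c') else 0) := by
    simp only [restrictK_apply, nu1_restrictK, prodQ, Qcond, if_pos hk]
    field_simp
  rw [fres, if_pos hp, hratio, Real.log_mul (by positivity) (by positivity), truncLogRatio]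

theorem fres_mul_restrictK [Finite 𝒳] (hQ0 : ∀ a c, 0 ≤ Q a c) (hν0 : ∀ p, 0 ≤ ν p)
    (hν1 : HasSum ν 1) (habs : ∀ p, prodQ (nu1 ν) Q p = 0 → ν p = 0) (k : ℕ)
    (p : 𝒳 × XStar 𝒳) :
    fres Q k ν p * restrictK k ν p
      = (f0q Q ν p + fq1 Q ν p) * restrictK k ν p + truncLogRatio Q ν k p.1 * restrictK k ν p := by
  rcases (restrictK_nonneg hν0 k p).eq_or_lt with h | h
  · simp [← h]
  obtain ⟨-, hpos, -⟩ := pos_of_restrictK_pos hν0 h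
  rw [fres_eq_log_add_truncLogRatio hQ0 hν0 habs h,
    f0q_add_fq1 hpos (le_hasSum hν1 p fun q _ => hν0 q)]
  ring

theorem abs_tsum_mul_restrictK_le [Fintype 𝒳] (hν0 : ∀ p, 0 ≤ ν p) (g : 𝒳 → ℝ) (k : ℕ) :
    |∑' p, g p.1 * restrictK k ν p| ≤ ‖g‖ := by
  have hmass : ∑' p, restrictK k ν p ≤ 1 := by
    have h := tsum_mul_restrictK (ν := ν) (fun _ => 1) k
    simp only [one_mul] at h
    exact h.trans_le (div_self_le_one _)
  calc |∑' p, g p.1 * restrictK k ν p|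
      ≤ ∑' p, ‖g‖ * restrictK k ν p := by
        refine (norm_tsum_le_tsum_norm (summable_mul_restrictK _ k).norm).trans
          (Summable.tsum_le_tsum (fun p => ?_) (summable_mul_restrictK _ k).norm
            (summable_mul_restrictK _ k))
        rw [Real.norm_eq_abs, abs_mul, abs_of_nonneg (restrictK_nonneg hν0 k p)]
        exact mul_le_mul_of_nonneg_right (norm_le_pi_norm g p.1) (restrictK_nonneg hν0 k p)
    _ = ‖g‖ * ∑' p, restrictK k ν p := tsum_mul_left
    _ ≤ ‖g‖ := mul_le_of_le_one_right (norm_nonneg g) hmass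

theorem tendsto_tsum_fres_mul_restrictK [Fintype 𝒳] (hQ : IsKernel Q) (hν0 : ∀ p, 0 ≤ ν p)
    (hν1 : HasSum ν 1) (habs : ∀ p, prodQ (nu1 ν) Q p = 0 → ν p = 0)
    (hf0q : Summable fun p => f0q Q ν p * ν p) (hfq1 : Summable fun p => fq1 Q ν p * ν p) :
    Tendsto (fun k => ∑' p, fres Q k ν p * restrictK k ν p) atTop
      (𝓝 (∑' p, f0q Q ν p * ν p + ∑' p, fq1 Q ν p * ν p)) := by
  have hsplit : ∀ k, ∑' p, fres Q k ν p * restrictK k ν p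
      = ∑' p, (f0q Q ν p + fq1 Q ν p) * restrictK k ν p
        + ∑' p, truncLogRatio Q ν k p.1 * restrictK k ν p := fun k => by
    rw [← (summable_mul_restrictK _ k).tsum_add (summable_mul_restrictK _ k)]
    exact tsum_congr (fres_mul_restrictK hQ.1 hν0 hν1 habs k)
  have hmain := tendsto_tsum_mul_restrictK hν1 (f := fun p => f0q Q ν p + fq1 Q ν p)
    (by simpa only [add_mul] using hf0q.add hfq1)
  have herr : Tendsto (fun k => ∑' p, truncLogRatio Q ν k p.1 * restrictK k ν p) atTop (𝓝 0) :=
    squeeze_zero_norm (fun k => abs_tsum_mul_restrictK_le hν0 _ k)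
      (by simpa using (tendsto_truncLogRatio hQ.2 hν1.summable).norm)
  simp_rw [hsplit]
  simpa [add_mul, hf0q.tsum_add hfq1] using hmain.add herr

end Conditioning

/-- **Lemma 3.6** (limit inequalities). Let `ν ≪ ν₁ ⊗ ℚ`. Then
(i) `limsup_k ⟨f^{(0,q]}, ν_k⟩ ≤ ⟨f^{(0,q]}, ν⟩`, and
(ii) `limsup_k ⟨f_k, ν_k⟩ ≤ ⟨f^{(0,q]}, ν⟩ + ⟨f^{(q,1]}, ν⟩`. -/
theorem stmt10 {𝒳 : Type} [Fintype 𝒳] [Nonempty 𝒳]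
    (Q : 𝒳 → XStar 𝒳 → ℝ) (ν : (𝒳 × XStar 𝒳) → ℝ)
    (hQ : IsKernel Q) (hν : ν ∈ Mstar 𝒳)
    (habs : ∀ p : 𝒳 × XStar 𝒳, prodQ (nu1 ν) Q p = 0 → ν p = 0) :
    Filter.limsup (fun k : ℕ => pairE (f0q Q ν) (restrictK k ν)) Filter.atTop
        ≤ pairE (f0q Q ν) ν ∧
    Filter.limsup (fun k : ℕ => pairE (fres Q k ν) (restrictK k ν)) Filter.atTop
        ≤ pairE (f0q Q ν) ν + pairE (fq1 Q ν) ν := by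
  obtain ⟨hν0, hν1, -⟩ := hν
  have hf0q : Summable fun p => f0q Q ν p * ν p := summable_f0q_mul hQ hν0
  refine ⟨(tendsto_pairE_restrictK hν1 hf0q).limsup_eq.le, ?_⟩
  by_cases hfq1 : Summable fun p => fq1 Q ν p * ν p
  · rw [pairE_eq_coe_tsum hf0q, pairE_eq_coe_tsum hfq1, ← EReal.coe_add]
    simp_rw [pairE_eq_coe_tsum (summable_mul_restrictK _ _)]
    exact (EReal.tendsto_coe.2
      (tendsto_tsum_fres_mul_restrictK hQ hν0 hν1 habs hf0q hfq1)).limsup_eq.le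
  · have hfq1_nonneg p : 0 ≤ fq1 Q ν p * ν p :=
      mul_nonneg (fq1_nonneg (prodQ_nonneg (nu1_nonneg hν0) hQ.1 p)) (hν0 p)
    rw [pairE_eq_top_of_not_summable hfq1_nonneg hfq1, pairE_eq_coe_tsum hf0q,
      EReal.add_top_of_ne_bot (EReal.coe_ne_bot _)]
    exact le_top

end GWLD
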